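/- One has the inclusions Lf_Q~ ⊆ NN_Q~ ⊆ 2·(Lf_Q~ − Lf_Q~), where Lf_Q~ − Lf_Q~ = {a − b : a, b ∈ Lf_Q~} is the difference body of the section Lf_Q~. -/

import Mathlib

open MeasureTheory Finset

noncomputable section

/-- The space `Q` of even quartics, represented by symmetric coefficient matrices
`a : Fin n → Fin n → ℝ` (the quartic being `∑ i j, a i j * x i ^ 2 * x j ^ 2`). -/
def symSub (n : ℕ) : Submodule ℝ (Fin n → Fin n → ℝ) where
  carrier := {a | ∀ i j, a i j = a j i}
  add_mem' := by
    intro a b ha hb i j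
    simp only [Pi.add_apply, ha i j, hb i j]
  zero_mem' := by intro i j; rfl
  smul_mem' := by
    intro c a ha i j
    simp only [Pi.smul_apply, smul_eq_mul, ha i j]

/-- The even quartic form corresponding to a symmetric coefficient matrix. -/
def qfun {n : ℕ} (a : symSub n) (x : EuclideanSpace ℝ (Fin n)) : ℝ :=
  ∑ i, ∑ j, a.1 i j * (x i)^2 * (x j)^2

/-- The element of `Q` corresponding to `r(x) = (x_1^2 + ... + x_n^2)^2`. -/
def rQ (n : ℕ) : symSub n := ⟨fun _ _ => 1, fun _ _ => rfl⟩

/-- The section `K~ = {f ∈ M : f + r ∈ K}` of a cone `K ⊆ Q`. -/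
def sect {n : ℕ} (σ : Measure (EuclideanSpace ℝ (Fin n))) (K : Set (symSub n)) :
    Set (symSub n) :=
  {a | (∫ x, qfun a x ∂σ) = 0 ∧ a + rQ n ∈ K}

/-- The volume radius of a subset of `M`, computed through a linear isometry `ψ`
of `ℝ^(dim M)` (with Lebesgue measure) onto `M`. -/
def vrad {n d : ℕ} (ψ : EuclideanSpace ℝ (Fin d) →ₗ[ℝ] symSub n)
    (C : Set (symSub n)) : ℝ :=
  ((volume (⇑ψ ⁻¹' C)).toReal /
    (volume (Metric.closedBall (0 : EuclideanSpace ℝ (Fin d)) 1)).toReal) ^ ((1:ℝ)/(d:ℝ))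

/-- `pr_Q(ℓ⁴)` for the linear form `ℓ = ∑ j, v j * x j`, as an element of `Q`:
the projection of `(∑ j, v j x j)⁴` keeping exactly the coefficients of the
monomials `x i² x j²` has coefficient matrix with diagonal entries `v i⁴` and
off-diagonal entries `3 v i² v j²`. -/
def Pmat {n : ℕ} (v : Fin n → ℝ) : symSub n :=
  ⟨fun p q => if p = q then (v p)^4 else 3 * (v p)^2 * (v q)^2, by
    intro p q
    by_cases h : p = q
    · simp [h]
    · simp only [if_neg h, if_neg (Ne.symm h)]
      ring⟩

/-- `Lf_Q`: projections to `Q` of sums of fourth powers of linear forms. -/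
def LfQ (n : ℕ) : Set (symSub n) :=
  {a | ∃ (k : ℕ) (w : Fin k → Fin n → ℝ), a = ∑ i, Pmat (w i)}

/-- `NN_Q`: even quartics with nonnegative coefficients. -/
def NNQ (n : ℕ) : Set (symSub n) :=
  {a | ∀ i j, 0 ≤ a.1 i j}

/-!
The first inclusion holds because `pr_Q(ℓ⁴)` has nonnegative coefficients. For the second, the
key point is that under a rotation-invariant probability measure on the sphere the monomial
`x_i² x_j²` (`i ≠ j`) has the same integral as `(x_i⁴ + x_j⁴) / 6`: rotating the `(x_i, x_j)`-plane
by `π/4` turns it into `(x_i² - x_j²)² / 4`. Replacing every off-diagonal monomial of a quartic `c`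
in this way gives a diagonal quartic `T` with the same integral. If `c = h + r` has nonnegative
coefficients, then `c + T` is a nonnegative combination of the `pr_Q((x_p + x_q)⁴)` and the `x_i⁴`,
and `r + T` one of `pr_Q((x_1 + ⋯ + x_n)⁴)` and the `x_i⁴`; hence `a = (c + T) / 2 - r` and `b = (r + T) / 2 - r` lie in `Lf_Q~`, and
`2 (a - b) = c - r = h`.
-/

section

variable {n : ℕ}

lemma Pmat_apply (v : Fin n → ℝ) (i j : Fin n) :
    (Pmat v).1 i j = if i = j then v i ^ 4 else 3 * v i ^ 2 * v j ^ 2 := rfl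

lemma Pmat_smul (t : ℝ) (v : Fin n → ℝ) : Pmat (t • v) = t ^ 4 • Pmat v := by
  ext i j
  simp only [SetLike.val_smul, Pi.smul_apply, Pmat_apply, smul_eq_mul]
  split_ifs <;> ring

lemma Pmat_mem_LfQ (v : Fin n → ℝ) : Pmat v ∈ LfQ n :=
  ⟨1, fun _ => v, by simp⟩

lemma zero_mem_LfQ : (0 : symSub n) ∈ LfQ n :=
  ⟨0, Fin.elim0, by simp⟩

lemma add_mem_LfQ {a b : symSub n} (ha : a ∈ LfQ n) (hb : b ∈ LfQ n) : a + b ∈ LfQ n := by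
  obtain ⟨k, v, rfl⟩ := ha
  obtain ⟨l, w, rfl⟩ := hb
  exact ⟨k + l, Fin.append v w, by simp [Fin.sum_univ_add]⟩

lemma sum_mem_LfQ {ι : Type*} (s : Finset ι) {f : ι → symSub n} (hf : ∀ i ∈ s, f i ∈ LfQ n) :
    ∑ i ∈ s, f i ∈ LfQ n :=
  Finset.sum_induction f (· ∈ LfQ n) (fun _ _ => add_mem_LfQ) zero_mem_LfQ hf

lemma smul_mem_LfQ {t : ℝ} (ht : 0 ≤ t) {a : symSub n} (ha : a ∈ LfQ n) : t • a ∈ LfQ n := by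
  obtain ⟨k, v, rfl⟩ := ha
  refine ⟨k, fun i => t ^ ((4 : ℕ) : ℝ)⁻¹ • v i, ?_⟩
  simp only [Pmat_smul, Real.rpow_inv_natCast_pow ht four_ne_zero, Finset.smul_sum]

lemma LfQ_subset_NNQ : LfQ n ⊆ NNQ n := by
  rintro _ ⟨k, v, rfl⟩ i j
  rw [AddSubmonoidClass.coe_finsetSum, Finset.sum_apply, Finset.sum_apply]
  refine Finset.sum_nonneg fun l _ => ?_
  rw [Pmat_apply]
  split_ifs <;> positivity

def diagQ : (Fin n → ℝ) →ₗ[ℝ] symSub n where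
  toFun d := ⟨fun i j => if i = j then d i else 0, fun i j => by
    by_cases h : i = j
    · subst h; rfl
    · simp [h, Ne.symm h]⟩
  map_add' d e := by ext i j; by_cases h : i = j <;> simp [h]
  map_smul' t d := by ext i j; by_cases h : i = j <;> simp [h]

lemma diagQ_apply (d : Fin n → ℝ) (i j : Fin n) : (diagQ d).1 i j = if i = j then d i else 0 := rfl

lemma Pmat_single (i : Fin n) (t : ℝ) : Pmat (Pi.single i t) = diagQ (Pi.single i (t ^ 4)) := by
  ext p q
  rw [Pmat_apply, diagQ_apply]
  by_cases hpq : p = q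
  · subst hpq; simp [Pi.single_apply]
  · by_cases hp : p = i
    · subst hp; simp [hpq, Ne.symm hpq]
    · simp [Pi.single_apply, hpq, hp]

lemma diagQ_mem_LfQ {d : Fin n → ℝ} (hd : 0 ≤ d) : diagQ d ∈ LfQ n := by
  rw [← Finset.univ_sum_single d, map_sum]
  refine sum_mem_LfQ _ fun i _ => ?_
  rw [← Real.rpow_inv_natCast_pow (hd i) four_ne_zero, ← Pmat_single]
  exact Pmat_mem_LfQ _

lemma rQ_mem_LfQ : rQ n ∈ LfQ n := by
  have : rQ n = (1 / 3 : ℝ) • Pmat (fun _ => 1) + diagQ (fun _ => 2 / 3) := by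
    ext i j
    simp only [rQ, Submodule.coe_add, Submodule.coe_smul, Pi.add_apply, Pi.smul_apply,
      Pmat_apply, diagQ_apply, smul_eq_mul]
    split_ifs <;> norm_num
  rw [this]
  exact add_mem_LfQ (smul_mem_LfQ (by norm_num) (Pmat_mem_LfQ _))
    (diagQ_mem_LfQ fun _ => by norm_num)

lemma Pmat_of_sq_eq_self {v : Fin n → ℝ} (hv : ∀ k, v k ^ 2 = v k) (i j : Fin n) :
    (Pmat v).1 i j = if i = j then v i else 3 * v i * v j := by
  rw [Pmat_apply, show (4 : ℕ) = 2 * 2 from rfl, pow_mul]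
  simp only [hv]

lemma Pmat_single_add_single {p q : Fin n} (hpq : p ≠ q) (i j : Fin n) :
    (Pmat (Pi.single p 1 + Pi.single q 1)).1 i j =
      if i = j then (if i = p then 1 else 0) + (if i = q then 1 else 0)
      else 3 * ((if i = p then 1 else 0) + (if i = q then 1 else 0)) *
        ((if j = p then 1 else 0) + (if j = q then 1 else 0)) := by
  rw [Pmat_of_sq_eq_self]
  · simp [Pi.single_apply]
  · intro k
    by_cases hp : k = p
    · subst hp; simp [hpq]
    · by_cases hq : k = q <;> simp [hp, hq, hpq.symm]

-- The diagonal quartic obtained by replacing each `x_i² x_j²` (`i ≠ j`) by `(x_i⁴ + x_j⁴) / 6`.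
def diagCollapse (c : symSub n) (i : Fin n) : ℝ := (∑ j, c.1 i j + 2 * c.1 i i) / 3

lemma add_diagQ_diagCollapse_eq (c : symSub n) :
    c + diagQ (diagCollapse c) = diagQ (fun i => 2 * c.1 i i) +
      ∑ p, ∑ q, (if p = q then 0 else c.1 p q / 6) • Pmat (Pi.single p 1 + Pi.single q 1) := by
  set w : Fin n → Fin n → ℝ := fun p q => if p = q then 0 else c.1 p q / 6 with hw
  have hw_apply : ∀ p q, (if p = q then 0 else c.1 p q / 6) = w p q := fun _ _ => rfl
  have hw_symm : ∀ p q, w p q = w q p := fun p q => by simp only [hw, eq_comm, c.2 p q]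
  have hw_row : ∀ i, ∑ q, w i q = (∑ q, c.1 i q - c.1 i i) / 6 := fun i => by
    simp [hw, Finset.sum_ite, Finset.filter_ne, Finset.sum_erase_eq_sub, ← Finset.sum_div]
  have hentry : ∀ p q i j, w p q * (Pmat (Pi.single p 1 + Pi.single q 1)).1 i j =
      w p q * if i = j then (if i = p then 1 else 0) + (if i = q then 1 else 0)
        else 3 * ((if i = p then 1 else 0) + (if i = q then 1 else 0)) *
          ((if j = p then 1 else 0) + (if j = q then 1 else 0)) := by
    intro p q i j
    by_cases hpq : p = q
    · simp [hw, hpq]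
    · rw [Pmat_single_add_single hpq]
  ext i j
  simp only [Submodule.coe_add, AddSubmonoidClass.coe_finsetSum, Submodule.coe_smul, Pi.add_apply,
    Finset.sum_apply, Pi.smul_apply, smul_eq_mul, hw_apply, hentry, diagQ_apply]
  by_cases hij : i = j
  · subst hij
    simp only [↓reduceIte, mul_add, mul_ite, mul_one, mul_zero, sum_add_distrib, sum_ite_irrel,
      sum_const_zero, sum_ite_eq, mem_univ]
    rw [Finset.sum_congr rfl fun q _ => hw_symm q i, hw_row, diagCollapse]
    ring
  · simp only [hij, ↓reduceIte, add_zero, zero_add, mul_add, mul_ite, mul_one, mul_zero,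
      sum_add_distrib, sum_ite_irrel, sum_const_zero, sum_ite_eq, mem_univ]
    rw [hw_symm j i, ← hw_apply, if_neg hij]
    ring

lemma add_diagQ_diagCollapse_mem_LfQ {c : symSub n} (hc : c ∈ NNQ n) :
    c + diagQ (diagCollapse c) ∈ LfQ n := by
  rw [add_diagQ_diagCollapse_eq]
  refine add_mem_LfQ (diagQ_mem_LfQ fun i => by simpa using hc i i)
    (sum_mem_LfQ _ fun p _ => sum_mem_LfQ _ fun q _ => smul_mem_LfQ ?_ (Pmat_mem_LfQ _))
  split_ifs
  · rfl
  · exact div_nonneg (hc p q) (by norm_num)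

lemma diagCollapse_nonneg {c : symSub n} (hc : c ∈ NNQ n) : 0 ≤ diagCollapse c := fun i =>
  div_nonneg (add_nonneg (Finset.sum_nonneg fun j _ => hc i j) (mul_nonneg zero_le_two (hc i i)))
    zero_le_three

def coeffPairing (β : Fin n → Fin n → ℝ) : symSub n →ₗ[ℝ] ℝ where
  toFun a := ∑ i, ∑ j, a.1 i j * β i j
  map_add' a b := by simp only [Submodule.coe_add, Pi.add_apply, add_mul, Finset.sum_add_distrib]
  map_smul' t a := by
    simp only [Submodule.coe_smul, Pi.smul_apply, smul_eq_mul, RingHom.id_apply, Finset.mul_sum,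
      mul_assoc]

lemma coeffPairing_diagQ_diagCollapse {β : Fin n → Fin n → ℝ}
    (hβ : ∀ i j, i ≠ j → 6 * β i j = β i i + β j j) (c : symSub n) :
    coeffPairing β (diagQ (diagCollapse c)) = coeffPairing β c := by
  have hpoint : ∀ i j, c.1 i j * β i j = c.1 i j * β i i / 6 + c.1 j i * β j j / 6 +
      if i = j then 2 / 3 * (c.1 i i * β i i) else 0 := by
    intro i j
    by_cases hij : i = j
    · subst hij; simp only [↓reduceIte]; ring
    · rw [if_neg hij, c.2 j i]; linear_combination c.1 i j / 6 * hβ i j hij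
  calc coeffPairing β (diagQ (diagCollapse c)) = ∑ i, diagCollapse c i * β i i := by
        simp [coeffPairing, diagQ_apply]
    _ = ∑ i, ∑ j, (c.1 i j * β i i / 6 + c.1 j i * β j j / 6 +
          if i = j then 2 / 3 * (c.1 i i * β i i) else 0) := by
        simp only [Finset.sum_add_distrib]
        rw [Finset.sum_comm (f := fun i j => c.1 j i * β j j / 6)]
        simp only [Finset.sum_ite_eq, Finset.mem_univ, if_true, ← Finset.sum_div, ← Finset.sum_mul]
        rw [Finset.sum_div, ← Finset.sum_add_distrib, ← Finset.sum_add_distrib]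
        exact Finset.sum_congr rfl fun i _ => by rw [diagCollapse]; ring
    _ = coeffPairing β c :=
        Finset.sum_congr rfl fun i _ => Finset.sum_congr rfl fun j _ => (hpoint i j).symm

theorem exists_LfQ_sub_LfQ (L : symSub n →ₗ[ℝ] ℝ) (hL : ∀ c, L (diagQ (diagCollapse c)) = L c)
    {r h : symSub n} (hr : r ∈ LfQ n) (hh : L h = 0) (hhr : h + r ∈ NNQ n) :
    ∃ a, (L a = 0 ∧ a + r ∈ LfQ n) ∧ ∃ b, (L b = 0 ∧ b + r ∈ LfQ n) ∧ h = (2 : ℝ) • (a - b) := by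
  set T := diagQ (diagCollapse (h + r))
  have hT : T ∈ LfQ n := diagQ_mem_LfQ (diagCollapse_nonneg hhr)
  have hLT : L T = L h + L r := by rw [hL, map_add]
  refine ⟨(1 / 2 : ℝ) • (h + r + T) - r, ⟨?_, ?_⟩, (1 / 2 : ℝ) • (r + T) - r, ⟨?_, ?_⟩, ?_⟩
  · simp only [map_sub, map_smul, map_add, hLT, hh, smul_eq_mul]; ring
  · rw [sub_add_cancel]
    exact smul_mem_LfQ (by norm_num) (add_diagQ_diagCollapse_mem_LfQ hhr)
  · simp only [map_sub, map_smul, map_add, hLT, hh, smul_eq_mul]; ring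
  · rw [sub_add_cancel]
    exact smul_mem_LfQ (by norm_num) (add_mem_LfQ hr hT)
  · module

def moment (σ : Measure (EuclideanSpace ℝ (Fin n))) (i j : Fin n) : ℝ :=
  ∫ x, x i ^ 2 * x j ^ 2 ∂σ

lemma integral_qfun {σ : Measure (EuclideanSpace ℝ (Fin n))}
    (hint : ∀ i j : Fin n, Integrable (fun x : EuclideanSpace ℝ (Fin n) => x i ^ 2 * x j ^ 2) σ)
    (a : symSub n) : ∫ x, qfun a x ∂σ = coeffPairing (moment σ) a := by
  simp only [qfun, mul_assoc]
  rw [integral_finsetSum _ fun i _ => integrable_finsetSum _ fun j _ => (hint i j).const_mul _]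
  refine Finset.sum_congr rfl fun i _ => ?_
  rw [integral_finsetSum _ fun j _ => (hint i j).const_mul _]
  exact Finset.sum_congr rfl fun j _ => integral_const_mul _ _

lemma integrable_of_ae_mem_compact {X : Type*} [TopologicalSpace X] [T2Space X]
    [MeasurableSpace X] [OpensMeasurableSpace X] {μ : Measure X} [IsFiniteMeasureOnCompacts μ]
    {K : Set X} (hK : IsCompact K) (hμK : ∀ᵐ x ∂μ, x ∈ K) {E : Type*} [NormedAddCommGroup E]
    {f : X → E} (hf : Continuous f) :
    Integrable f μ := by
  rw [← Measure.restrict_eq_self_of_ae_mem hμK]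
  exact hf.continuousOn.integrableOn_compact hK

def planeRotation (p q : Fin n) : EuclideanSpace ℝ (Fin n) →ₗ[ℝ] EuclideanSpace ℝ (Fin n) :=
  (WithLp.linearEquiv 2 ℝ (Fin n → ℝ)).symm.toLinearMap ∘ₗ LinearMap.pi fun k =>
    ((if k = p then (√2)⁻¹ • (EuclideanSpace.proj p + EuclideanSpace.proj q)
      else if k = q then (√2)⁻¹ • (EuclideanSpace.proj q - EuclideanSpace.proj p)
      else EuclideanSpace.proj k : StrongDual ℝ (EuclideanSpace ℝ (Fin n))) :
      EuclideanSpace ℝ (Fin n) →ₗ[ℝ] ℝ)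

lemma planeRotation_apply (p q : Fin n) (x : EuclideanSpace ℝ (Fin n)) (k : Fin n) :
    planeRotation p q x k =
      if k = p then (x p + x q) / √2 else if k = q then (x q - x p) / √2 else x k := by
  split_ifs with hp hq
  · subst hp; simp [planeRotation, div_eq_inv_mul, mul_add]
  · subst hq; simp [planeRotation, hp, div_eq_inv_mul, mul_sub]
  · simp [planeRotation, hp, hq]

lemma sq_planeRotation_apply {p q : Fin n} (hpq : p ≠ q) (x : EuclideanSpace ℝ (Fin n))
    (k : Fin n) :
    planeRotation p q x k ^ 2 = x k ^ 2 +
      ((if k = p then (x q ^ 2 - x p ^ 2) / 2 + x p * x q else 0) -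
        if k = q then (x q ^ 2 - x p ^ 2) / 2 + x p * x q else 0) := by
  have h2 : √2 ^ 2 = 2 := Real.sq_sqrt zero_le_two
  rw [planeRotation_apply]
  by_cases hp : k = p
  · subst hp; simp only [↓reduceIte, if_neg hpq, div_pow, h2]; ring
  · by_cases hq : k = q
    · subst hq; simp only [↓reduceIte, if_neg hp, div_pow, h2]; ring
    · simp only [if_neg hp, if_neg hq]; ring

lemma norm_planeRotation {p q : Fin n} (hpq : p ≠ q) (x : EuclideanSpace ℝ (Fin n)) :
    ‖planeRotation p q x‖ = ‖x‖ := by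
  rw [← sq_eq_sq₀ (norm_nonneg _) (norm_nonneg _), EuclideanSpace.real_norm_sq_eq,
    EuclideanSpace.real_norm_sq_eq]
  simp [sq_planeRotation_apply hpq, Finset.sum_add_distrib, Finset.sum_sub_distrib]

def planeRotationEquiv {p q : Fin n} (hpq : p ≠ q) :
    EuclideanSpace ℝ (Fin n) ≃ₗᵢ[ℝ] EuclideanSpace ℝ (Fin n) :=
  LinearIsometry.toLinearIsometryEquiv ⟨planeRotation p q, norm_planeRotation hpq⟩ rfl

lemma six_mul_moment {σ : Measure (EuclideanSpace ℝ (Fin n))}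
    (hσinv : ∀ O : EuclideanSpace ℝ (Fin n) ≃ₗᵢ[ℝ] EuclideanSpace ℝ (Fin n), σ.map O = σ)
    (hint : ∀ i j : Fin n, Integrable (fun x : EuclideanSpace ℝ (Fin n) => x i ^ 2 * x j ^ 2) σ)
    {p q : Fin n} (hpq : p ≠ q) : 6 * moment σ p q = moment σ p p + moment σ q q := by
  set O := planeRotationEquiv hpq
  have hO : ∀ x, O x p ^ 2 * O x q ^ 2 =
      (x p ^ 2 * x p ^ 2 + x q ^ 2 * x q ^ 2 - 2 * (x p ^ 2 * x q ^ 2)) / 4 := by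
    intro x
    have h2 : √2 ^ 2 = 2 := Real.sq_sqrt zero_le_two
    change planeRotation p q x p ^ 2 * planeRotation p q x q ^ 2 = _
    simp only [planeRotation_apply, ↓reduceIte, if_neg hpq.symm, div_pow, h2]
    ring
  have hinv : moment σ p q = ∫ x, O x p ^ 2 * O x q ^ 2 ∂σ := by
    conv_lhs => rw [moment, ← hσinv O]
    exact integral_map O.continuous.aemeasurable (by fun_prop)
  have hexpand : ∫ x, O x p ^ 2 * O x q ^ 2 ∂σ =
      (moment σ p p + moment σ q q - 2 * moment σ p q) / 4 := by
    rw [integral_congr_ae (.of_forall hO), integral_div, integral_sub,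
      integral_add (hint p p) (hint q q), integral_const_mul]
    · rfl
    · exact (hint p p).add (hint q q)
    · exact (hint p q).const_mul 2
  linarith

end

theorem stmt12 (n : ℕ)
    (σ : Measure (EuclideanSpace ℝ (Fin n)))
    (hσprob : IsProbabilityMeasure σ)
    (hσsphere : σ (Metric.sphere (0 : EuclideanSpace ℝ (Fin n)) 1) = 1)
    (hσinv : ∀ O : EuclideanSpace ℝ (Fin n) ≃ₗᵢ[ℝ] EuclideanSpace ℝ (Fin n),
      Measure.map (⇑O) σ = σ) :
    sect σ (LfQ n) ⊆ sect σ (NNQ n) ∧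
    sect σ (NNQ n) ⊆
      {h : symSub n | ∃ a ∈ sect σ (LfQ n), ∃ b ∈ sect σ (LfQ n),
        h = (2:ℝ) • (a - b)} := by
  have hsphere : ∀ᵐ x ∂σ, x ∈ Metric.sphere (0 : EuclideanSpace ℝ (Fin n)) 1 :=
    mem_ae_iff.2 ((prob_compl_eq_zero_iff Metric.isClosed_sphere.measurableSet).2 hσsphere)
  have hint : ∀ i j : Fin n, Integrable (fun x : EuclideanSpace ℝ (Fin n) => x i ^ 2 * x j ^ 2) σ :=
    fun i j => integrable_of_ae_mem_compact (isCompact_sphere 0 1) hsphere (by fun_prop)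
  have hL : ∀ c, coeffPairing (moment σ) (diagQ (diagCollapse c)) = coeffPairing (moment σ) c :=
    coeffPairing_diagQ_diagCollapse fun _ _ => six_mul_moment hσinv hint
  simp only [sect, integral_qfun hint]
  refine ⟨fun a ha => ⟨ha.1, LfQ_subset_NNQ ha.2⟩, fun h hh => ?_⟩
  exact exists_LfQ_sub_LfQ _ hL rQ_mem_LfQ hh.1 hh.2
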